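/- arXiv:1106.4642 — 4 statements merged into one kernel-verified Lean document; each statement's English description precedes it below -/
import Mathlib

section
/- Let a ∈ ℕ with a ≥ 1 and let μ ∈ C¹(B₁(0)\{0}, ℝ) satisfy c₁|x|^a ≤ |μ(x)| ≤ c₂|x|^a for some 0 < c₁ ≤ c₂ and |∇μ(x)| ≤ C_μ |x|^{a−1} for all 0 < |x| < 1. Then there exists a constant C' (depending only on a, c₁, c₂, C_μ) such that for every x with 0 < |x| < 1 and every nonnegative measurable function f on B₁(0): ∫_{B₁(0) ∩ B_{2|x|}(0)} |x−y|^{−2} f(y) |μ(y) − μ(x)| dy ≤ C' |μ(x)| ( |x|^{−2} ∫_{B₁(0) ∩ B_{2|x|}(0)} f(y) dy + |x|^{−1} ∫_{B₁(0) ∩ B_{2|x|}(0)} f(y)/|x−y| dy ). -/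
/-!
Write `r = ‖x - y‖`. Where `r ≤ ‖x‖ / 2` the segment from `x` to `y` stays in the annulus
`‖x‖ / 2 ≤ ‖z‖ ≤ 2 ‖x‖`, so the mean value inequality with the gradient bound gives
`|μ y - μ x| ≲ ‖x‖ ^ a * r / ‖x‖`. Where `r > ‖x‖ / 2`, the size bound alone gives
`|μ y - μ x| ≲ ‖x‖ ^ a ≲ ‖x‖ ^ a * r ^ 2 / ‖x‖ ^ 2`. Since `‖x‖ ^ a ≲ |μ x|`, dividing by `r ^ 2`
and integrating against `g` gives the estimate.
-/

open MeasureTheory Metric Complex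

/-- `a - 1` is truncated, so for `a = 0` the claim is `1 ≤ 1 / s`. -/
theorem pow_pred_le_two_pow_mul_pow_div {a : ℕ} {r s : ℝ} (hr : 0 ≤ r) (hrs : r ≤ 2 * s)
    (hs : 0 < s) (hs1 : s ≤ 1) : r ^ (a - 1) ≤ 2 ^ a * s ^ a / s := by
  rcases a with _ | n
  · simpa using one_le_one_div hs hs1
  · calc r ^ (n + 1 - 1) = r ^ n := rfl
      _ ≤ (2 * s) ^ n := pow_le_pow_left₀ hr hrs n
      _ ≤ 2 ^ (n + 1) * s ^ (n + 1) / s := by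
        rw [mul_pow, pow_succ, pow_succ, mul_div_assoc, mul_div_cancel_right₀ _ hs.ne']
        nlinarith [pow_nonneg (mul_nonneg zero_le_two hs.le) n, mul_pow (2 : ℝ) s n]

theorem ENNReal.ofReal_mul_le_add_of_le_add_mul_inv {p q w t : ℝ} (hq : 0 ≤ q) (hw : 0 ≤ w)
    (ht : 0 < t) (h : p ≤ q + w * t⁻¹) (c : ENNReal) :
    ENNReal.ofReal p * c ≤ ENNReal.ofReal q * c + ENNReal.ofReal w * (c / ENNReal.ofReal t) := by
  have hsplit : ENNReal.ofReal w * (c / ENNReal.ofReal t) = ENNReal.ofReal (w * t⁻¹) * c := by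
    rw [ENNReal.ofReal_mul hw, ENNReal.ofReal_inv_of_pos ht, ENNReal.div_eq_inv_mul]
    ring
  calc ENNReal.ofReal p * c ≤ ENNReal.ofReal (q + w * t⁻¹) * c := by gcongr
    _ = _ := by rw [hsplit, ENNReal.ofReal_add hq (by positivity), add_mul]

section

variable {E : Type*} [NormedAddCommGroup E] {μ : E → ℝ} {a : ℕ}
  {c₁ c₂ Cμ : ℝ} {x y : E}

theorem abs_sub_le_of_norm_le_two_mul (hc₂ : 0 ≤ c₂)
    (hup : ∀ z : E, z ≠ 0 → ‖z‖ < 1 → |μ z| ≤ c₂ * ‖z‖ ^ a)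
    (hx0 : x ≠ 0) (hx1 : ‖x‖ < 1) (hy0 : y ≠ 0) (hy1 : ‖y‖ < 1) (hy2 : ‖y‖ ≤ 2 * ‖x‖) :
    |μ y - μ x| ≤ c₂ * (2 ^ a + 1) * ‖x‖ ^ a := by
  have hμy : |μ y| ≤ c₂ * (2 ^ a * ‖x‖ ^ a) :=
    (hup y hy0 hy1).trans <| by
      rw [← mul_pow]; gcongr
  have hμx := hup x hx0 hx1
  calc |μ y - μ x| ≤ |μ y| + |μ x| := abs_sub _ _
    _ ≤ c₂ * (2 ^ a + 1) * ‖x‖ ^ a := by linarith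

variable [NormedSpace ℝ E]

theorem abs_sub_le_of_norm_sub_le_half (hμ : ContDiffOn ℝ 1 μ (ball (0 : E) 1 \ {0}))
    (hgrad : ∀ z : E, z ≠ 0 → ‖z‖ < 1 → ‖fderiv ℝ μ z‖ ≤ Cμ * ‖z‖ ^ (a - 1)) (hCμ : 0 ≤ Cμ)
    (hx0 : x ≠ 0) (hx1 : ‖x‖ < 1) (hy1 : ‖y‖ < 1) (hxy : ‖x - y‖ ≤ ‖x‖ / 2) :
    |μ y - μ x| ≤ Cμ * (2 ^ a * ‖x‖ ^ a / ‖x‖) * ‖x - y‖ := by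
  have hxpos : 0 < ‖x‖ := norm_pos_iff.mpr hx0
  set s := closedBall x (‖x‖ / 2) ∩ ball (0 : E) 1
  have hs : ∀ z ∈ s, z ≠ 0 ∧ ‖z‖ < 1 ∧ ‖z‖ ≤ 2 * ‖x‖ := by
    rintro z ⟨hzx, hz1⟩
    rw [mem_closedBall, dist_eq_norm] at hzx
    have h₁ := norm_sub_norm_le x z
    have h₂ := norm_sub_norm_le z x
    rw [norm_sub_rev] at h₁
    exact ⟨norm_pos_iff.mp (by linarith), mem_ball_zero_iff.mp hz1, by linarith⟩
  have hdiff : ∀ z ∈ s, DifferentiableAt ℝ μ z := fun z hz =>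
    have ⟨hz0, hz1, _⟩ := hs z hz
    (hμ.contDiffAt ((isOpen_ball.sdiff isClosed_singleton).mem_nhds
      ⟨mem_ball_zero_iff.mpr hz1, hz0⟩)).differentiableAt one_ne_zero
  have hbound : ∀ z ∈ s, ‖fderiv ℝ μ z‖ ≤ Cμ * (2 ^ a * ‖x‖ ^ a / ‖x‖) := fun z hz =>
    have ⟨hz0, hz1, hz2⟩ := hs z hz
    (hgrad z hz0 hz1).trans <| mul_le_mul_of_nonneg_left
      (pow_pred_le_two_pow_mul_pow_div (norm_nonneg z) hz2 hxpos hx1.le) hCμ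
  have hxs : x ∈ s := ⟨mem_closedBall_self (by positivity), mem_ball_zero_iff.mpr hx1⟩
  have hys : y ∈ s := ⟨by rwa [mem_closedBall, dist_eq_norm, norm_sub_rev],
    mem_ball_zero_iff.mpr hy1⟩
  have := ((convex_closedBall x _).inter (convex_ball 0 1)).norm_image_sub_le_of_norm_fderiv_le
    hdiff hbound hxs hys
  rwa [Real.norm_eq_abs, norm_sub_rev y] at this

theorem abs_sub_le_mul_add (hμ : ContDiffOn ℝ 1 μ (ball (0 : E) 1 \ {0}))
    (hup : ∀ z : E, z ≠ 0 → ‖z‖ < 1 → |μ z| ≤ c₂ * ‖z‖ ^ a)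
    (hgrad : ∀ z : E, z ≠ 0 → ‖z‖ < 1 → ‖fderiv ℝ μ z‖ ≤ Cμ * ‖z‖ ^ (a - 1))
    (hc₂ : 0 ≤ c₂) (hCμ : 0 ≤ Cμ)
    (hx0 : x ≠ 0) (hx1 : ‖x‖ < 1) (hy0 : y ≠ 0) (hy1 : ‖y‖ < 1) (hy2 : ‖y‖ ≤ 2 * ‖x‖) :
    |μ y - μ x| ≤ (4 * c₂ * (2 ^ a + 1) + Cμ * 2 ^ a) * ‖x‖ ^ a *
      (‖x - y‖ ^ 2 / ‖x‖ ^ 2 + ‖x - y‖ / ‖x‖) := by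
  have hxpos : 0 < ‖x‖ := norm_pos_iff.mpr hx0
  have hfar : 0 ≤ c₂ * (2 ^ a + 1) * ‖x‖ ^ a := by positivity
  have hnear : 0 ≤ Cμ * 2 ^ a * ‖x‖ ^ a := by positivity
  rcases le_or_gt ‖x - y‖ (‖x‖ / 2) with hxy | hxy
  · have h := abs_sub_le_of_norm_sub_le_half hμ hgrad hCμ hx0 hx1 hy1 hxy
    have hsq : 0 ≤ ‖x - y‖ ^ 2 / ‖x‖ ^ 2 := by positivity
    calc |μ y - μ x| ≤ Cμ * 2 ^ a * ‖x‖ ^ a * (‖x - y‖ / ‖x‖) := by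
          convert h using 1; ring
      _ ≤ _ := by nlinarith [div_nonneg (norm_nonneg (x - y)) hxpos.le]
  · have h := abs_sub_le_of_norm_le_two_mul hc₂ hup hx0 hx1 hy0 hy1 hy2
    have hsq : 1 ≤ 4 * (‖x - y‖ ^ 2 / ‖x‖ ^ 2) := by
      rw [← mul_div_assoc, le_div_iff₀ (by positivity)]; nlinarith
    have hlin : 0 ≤ ‖x - y‖ / ‖x‖ := by positivity
    nlinarith

theorem abs_sub_div_sq_le (hμ : ContDiffOn ℝ 1 μ (ball (0 : E) 1 \ {0}))
    (hup : ∀ z : E, z ≠ 0 → ‖z‖ < 1 → |μ z| ≤ c₂ * ‖z‖ ^ a)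
    (hgrad : ∀ z : E, z ≠ 0 → ‖z‖ < 1 → ‖fderiv ℝ μ z‖ ≤ Cμ * ‖z‖ ^ (a - 1))
    (hc₁ : 0 < c₁) (hc₂ : 0 ≤ c₂) (hCμ : 0 ≤ Cμ) (hlow : c₁ * ‖x‖ ^ a ≤ |μ x|)
    (hx0 : x ≠ 0) (hx1 : ‖x‖ < 1) (hy0 : y ≠ 0) (hy1 : ‖y‖ < 1) (hy2 : ‖y‖ ≤ 2 * ‖x‖)
    (hyx : y ≠ x) :
    let C' := (4 * c₂ * (2 ^ a + 1) + Cμ * 2 ^ a) / c₁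
    |μ y - μ x| / ‖x - y‖ ^ 2 ≤ C' * |μ x| / ‖x‖ ^ 2 + C' * |μ x| / ‖x‖ * ‖x - y‖⁻¹ := by
  intro C'
  have hxpos : 0 < ‖x‖ := norm_pos_iff.mpr hx0
  have hr : 0 < ‖x - y‖ := norm_pos_iff.mpr (sub_ne_zero.mpr hyx.symm)
  have hC' : (4 * c₂ * (2 ^ a + 1) + Cμ * 2 ^ a) * ‖x‖ ^ a ≤ C' * |μ x| := by
    rw [div_mul_eq_mul_div, le_div_iff₀ hc₁, mul_assoc, mul_comm _ c₁]
    gcongr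
  calc |μ y - μ x| / ‖x - y‖ ^ 2
      ≤ C' * |μ x| * (‖x - y‖ ^ 2 / ‖x‖ ^ 2 + ‖x - y‖ / ‖x‖) / ‖x - y‖ ^ 2 := by
        gcongr
        exact (abs_sub_le_mul_add hμ hup hgrad hc₂ hCμ hx0 hx1 hy0 hy1 hy2).trans
          (by gcongr)
    _ = C' * |μ x| / ‖x‖ ^ 2 + C' * |μ x| / ‖x‖ * ‖x - y‖⁻¹ := by
        field_simp

end

theorem stmt8_general (a : ℕ) (c₁ c₂ Cμ : ℝ) (hc₁ : 0 < c₁) (hc₁₂ : c₁ ≤ c₂)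
    (hCμ : 0 < Cμ) :
    ∃ C' : ℝ, 0 < C' ∧
      ∀ μ : ℂ → ℝ,
        ContDiffOn ℝ 1 μ (ball (0 : ℂ) 1 \ {0}) →
        (∀ x : ℂ, x ≠ 0 → ‖x‖ < 1 → c₁ * ‖x‖ ^ a ≤ |μ x| ∧ |μ x| ≤ c₂ * ‖x‖ ^ a) →
        (∀ x : ℂ, x ≠ 0 → ‖x‖ < 1 → ‖fderiv ℝ μ x‖ ≤ Cμ * ‖x‖ ^ (a - 1)) →
        ∀ x : ℂ, x ≠ 0 → ‖x‖ < 1 →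
          ∀ g : ℂ → ENNReal, Measurable g →
            (∫⁻ y in ball (0 : ℂ) 1 ∩ ball (0 : ℂ) (2 * ‖x‖),
                ENNReal.ofReal (|μ y - μ x| / ‖x - y‖ ^ 2) * g y)
              ≤ ENNReal.ofReal (C' * |μ x| / ‖x‖ ^ 2) *
                  (∫⁻ y in ball (0 : ℂ) 1 ∩ ball (0 : ℂ) (2 * ‖x‖), g y)
                + ENNReal.ofReal (C' * |μ x| / ‖x‖) *
                  (∫⁻ y in ball (0 : ℂ) 1 ∩ ball (0 : ℂ) (2 * ‖x‖),
                    g y / ENNReal.ofReal ‖x - y‖) := by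
  have hc₂ : 0 ≤ c₂ := hc₁.le.trans hc₁₂
  set C' := (4 * c₂ * (2 ^ a + 1) + Cμ * 2 ^ a) / c₁ with hC'
  refine ⟨C', by rw [hC']; positivity, ?_⟩
  intro μ hμ hbnd hgrad x hx0 hx1 g hg
  have hxpos : 0 < ‖x‖ := norm_pos_iff.mpr hx0
  have hpointwise : ∀ᵐ y ∂volume.restrict (ball (0 : ℂ) 1 ∩ ball (0 : ℂ) (2 * ‖x‖)),
      ENNReal.ofReal (|μ y - μ x| / ‖x - y‖ ^ 2) * g y ≤
        ENNReal.ofReal (C' * |μ x| / ‖x‖ ^ 2) * g y +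
          ENNReal.ofReal (C' * |μ x| / ‖x‖) * (g y / ENNReal.ofReal ‖x - y‖) := by
    filter_upwards [ae_restrict_mem (measurableSet_ball.inter measurableSet_ball),
      ae_restrict_of_ae (compl_mem_ae_iff.mpr (measure_singleton (0 : ℂ))),
      ae_restrict_of_ae (compl_mem_ae_iff.mpr (measure_singleton x))] with y ⟨hy1, hy2⟩ hy0 hyx
    rw [mem_ball_zero_iff] at hy1 hy2
    exact ENNReal.ofReal_mul_le_add_of_le_add_mul_inv (by positivity) (by positivity)
      (norm_pos_iff.mpr (sub_ne_zero.mpr (Ne.symm hyx)))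
      (abs_sub_div_sq_le hμ (fun z hz0 hz1 => (hbnd z hz0 hz1).2) hgrad hc₁ hc₂ hCμ.le
        (hbnd x hx0 hx1).1 hx0 hx1 hy0 hy1 hy2.le hyx) (g y)
  refine (lintegral_mono_ae hpointwise).trans_eq ?_
  rw [lintegral_add_left (hg.const_mul _), lintegral_const_mul _ hg,
    lintegral_const_mul' _ _ ENNReal.ofReal_ne_top]

theorem stmt8 (a : ℕ) (ha : 1 ≤ a) (c₁ c₂ Cμ : ℝ) (hc₁ : 0 < c₁) (hc₁₂ : c₁ ≤ c₂)
    (hCμ : 0 < Cμ) :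
    ∃ C' : ℝ, 0 < C' ∧
      ∀ μ : ℂ → ℝ,
        ContDiffOn ℝ 1 μ (ball (0 : ℂ) 1 \ {0}) →
        (∀ x : ℂ, x ≠ 0 → ‖x‖ < 1 → c₁ * ‖x‖ ^ a ≤ |μ x| ∧ |μ x| ≤ c₂ * ‖x‖ ^ a) →
        (∀ x : ℂ, x ≠ 0 → ‖x‖ < 1 → ‖fderiv ℝ μ x‖ ≤ Cμ * ‖x‖ ^ (a - 1)) →
        ∀ x : ℂ, x ≠ 0 → ‖x‖ < 1 →
          ∀ g : ℂ → ENNReal, Measurable g →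
            (∫⁻ y in ball (0 : ℂ) 1 ∩ ball (0 : ℂ) (2 * ‖x‖),
                ENNReal.ofReal (|μ y - μ x| / ‖x - y‖ ^ 2) * g y)
              ≤ ENNReal.ofReal (C' * |μ x| / ‖x‖ ^ 2) *
                  (∫⁻ y in ball (0 : ℂ) 1 ∩ ball (0 : ℂ) (2 * ‖x‖), g y)
                + ENNReal.ofReal (C' * |μ x| / ‖x‖) *
                  (∫⁻ y in ball (0 : ℂ) 1 ∩ ball (0 : ℂ) (2 * ‖x‖),
                    g y / ENNReal.ofReal ‖x - y‖) :=
  stmt8_general a c₁ c₂ Cμ hc₁ hc₁₂ hCμ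
end

section
/- Let m ≥ 2 and θ₀ ∈ ℕ with θ₀ ≥ 1. Let Φ : B₁(0)\{0} → ℝ^m be a C¹ conformal map, i.e. ∂₁Φ(x)·∂₂Φ(x) = 0 and |∂₁Φ(x)| = |∂₂Φ(x)| =: e^{λ(x)} for all x. Suppose there are A = A¹ + iA² ∈ ℂ^m (with A¹, A² ∈ ℝ^m), a map T : B₁(0)\{0} → ℂ^m with T(x) → 0 as x → 0, and a constant c ∈ (0,∞) with e^{λ(x)}/|x|^{θ₀−1} → c as x → 0, such that ∂₁Φ(x) − i ∂₂Φ(x) = θ₀ A x^{θ₀−1} + e^{λ(x)} T(x) for all x ∈ B₁(0)\{0} (identifying x ∈ ℝ² with a complex number). Then A¹ · A² = 0 and |A¹| = |A²| = c/θ₀. -/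
open MeasureTheory Metric Complex Filter

open Topology Asymptotics

/-- `∂₁Φ` applied to the `k`-th component, for `Φ : ℂ → ℝ^m`. -/
noncomputable def p1 {m : ℕ} (Φ : ℂ → (Fin m → ℝ)) (x : ℂ) (k : Fin m) : ℝ :=
  fderiv ℝ (fun y => Φ y k) x 1

/-- `∂₂Φ` applied to the `k`-th component, for `Φ : ℂ → ℝ^m`. -/
noncomputable def p2 {m : ℕ} (Φ : ℂ → (Fin m → ℝ)) (x : ℂ) (k : Fin m) : ℝ :=
  fderiv ℝ (fun y => Φ y k) x Complex.I

/-- The conformal factor `e^{λ(x)} = |∂₁Φ(x)|` (Euclidean norm). -/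
noncomputable def eLam {m : ℕ} (Φ : ℂ → (Fin m → ℝ)) (x : ℂ) : ℝ :=
  Real.sqrt (∑ k, (p1 Φ x k) ^ 2)

/-! A vector `a + i b ∈ ℂ^m` is isotropic (`∑ (a_k + i b_k)² = 0`) exactly when `a ⊥ b` and
`|a| = |b|`; conformality of `Φ` says that `∂₁Φ − i∂₂Φ` is isotropic with squared length
`2e^{2λ}`. Dividing the expansion by `θ₀ x^{θ₀−1}` and using `e^λ = O(|x|^{θ₀−1})`, the vector
`(∂₁Φ − i∂₂Φ)/(θ₀ x^{θ₀−1})` tends to `A`, so `A` is isotropic with squared length `2(c/θ₀)²`. -/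

section IsotropicVectors

variable {ι : Type*} [Fintype ι]

lemma sum_sq_ofReal_add_I_mul (a b : ι → ℝ) :
    ∑ k, ((a k : ℂ) + I * b k) ^ 2
      = ((∑ k, a k ^ 2 - ∑ k, b k ^ 2 : ℝ) : ℂ) + ((2 * ∑ k, a k * b k : ℝ) : ℂ) * I := by
  push_cast
  rw [Finset.mul_sum, Finset.sum_mul, ← Finset.sum_sub_distrib, ← Finset.sum_add_distrib]
  refine Finset.sum_congr rfl fun k _ => ?_
  linear_combination (b k : ℂ) ^ 2 * I_sq

lemma sum_sq_ofReal_add_I_mul_eq_zero_iff (a b : ι → ℝ) :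
    ∑ k, ((a k : ℂ) + I * b k) ^ 2 = 0 ↔ ∑ k, a k * b k = 0 ∧ ∑ k, a k ^ 2 = ∑ k, b k ^ 2 := by
  rw [sum_sq_ofReal_add_I_mul, Complex.ext_iff]
  simp only [add_re, ofReal_re, mul_re, I_re, ofReal_im, I_im, add_im, mul_im, zero_re, zero_im]
  constructor
  · rintro ⟨hre, him⟩
    exact ⟨by linarith, by linarith⟩
  · rintro ⟨hab, hnorm⟩
    constructor <;> simp [hab, hnorm]

lemma norm_ofReal_add_I_mul_sq (a b : ℝ) : ‖(a : ℂ) + I * b‖ ^ 2 = a ^ 2 + b ^ 2 := by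
  rw [Complex.sq_norm, normSq_apply]
  simp only [add_re, ofReal_re, mul_re, I_re, ofReal_im, I_im, add_im, mul_im]
  ring

lemma sum_sq_ofReal_sub_I_mul_eq_zero {a b : ι → ℝ} (hab : ∑ k, a k * b k = 0)
    (hnorm : ∑ k, a k ^ 2 = ∑ k, b k ^ 2) : ∑ k, ((a k : ℂ) - I * b k) ^ 2 = 0 := by
  have := (sum_sq_ofReal_add_I_mul_eq_zero_iff a (-b)).2 ⟨by simp [hab], by simp [hnorm]⟩
  simpa [sub_eq_add_neg] using this

lemma sum_norm_ofReal_sub_I_mul_sq (a b : ι → ℝ) :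
    ∑ k, ‖(a k : ℂ) - I * b k‖ ^ 2 = ∑ k, a k ^ 2 + ∑ k, b k ^ 2 := by
  rw [← Finset.sum_add_distrib]
  refine Finset.sum_congr rfl fun k _ => ?_
  simpa [sub_eq_add_neg] using norm_ofReal_add_I_mul_sq (a k) (-b k)

lemma inner_eq_zero_and_sqrt_sum_sq_eq_of_isotropic {a b : ι → ℝ} {r : ℝ}
    (hiso : ∑ k, ((a k : ℂ) + I * b k) ^ 2 = 0)
    (hnorm : ∑ k, ‖(a k : ℂ) + I * b k‖ ^ 2 = 2 * r ^ 2) (hr : 0 ≤ r) :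
    ∑ k, a k * b k = 0 ∧ √(∑ k, a k ^ 2) = r ∧ √(∑ k, b k ^ 2) = r := by
  obtain ⟨hab, hab_norm⟩ := (sum_sq_ofReal_add_I_mul_eq_zero_iff a b).1 hiso
  simp only [norm_ofReal_add_I_mul_sq, Finset.sum_add_distrib] at hnorm
  have ha : ∑ k, a k ^ 2 = r ^ 2 := by linarith
  have hb : ∑ k, b k ^ 2 = r ^ 2 := by linarith
  exact ⟨hab, by rw [ha, Real.sqrt_sq hr], by rw [hb, Real.sqrt_sq hr]⟩

end IsotropicVectors

lemma tendsto_div_of_eq_mul_add_mul {α 𝕜 : Type*} [NormedField 𝕜] {l : Filter α}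
    {F g e T : α → 𝕜} {v : 𝕜} (hF : ∀ᶠ x in l, F x = v * g x + e x * T x)
    (hg : ∀ᶠ x in l, g x ≠ 0) (he : e =O[l] g) (hT : Tendsto T l (𝓝 0)) :
    Tendsto (fun x => F x / g x) l (𝓝 v) := by
  have hrem : (fun x => e x * T x) =o[l] g := by
    simpa using he.mul_isLittleO ((isLittleO_one_iff 𝕜).2 hT)
  have hlim : Tendsto (fun x => v + e x * T x / g x) l (𝓝 v) := by
    simpa using hrem.tendsto_div_nhds_zero.const_add v
  refine hlim.congr' ?_
  filter_upwards [hF, hg] with x hFx hgx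
  rw [hFx]
  field_simp

lemma sum_sq_eq_zero_of_tendsto_div {α ι 𝕜 : Type*} [Fintype ι] [NormedField 𝕜] {l : Filter α}
    [l.NeBot] {u : α → ι → 𝕜} {g : α → 𝕜} {v : ι → 𝕜}
    (hu : ∀ k, Tendsto (fun x => u x k / g x) l (𝓝 (v k))) (h0 : ∀ᶠ x in l, ∑ k, u x k ^ 2 = 0) :
    ∑ k, v k ^ 2 = 0 := by
  refine tendsto_nhds_unique (tendsto_finsetSum _ fun k _ => (hu k).pow 2)
    (tendsto_const_nhds.congr' ?_)
  filter_upwards [h0] with x hx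
  simp only [div_pow, ← Finset.sum_div, hx, zero_div]

lemma isBigO_of_tendsto_norm_div_norm {α E F : Type*} [SeminormedAddCommGroup E]
    [SeminormedAddCommGroup F] {l : Filter α} {f : α → E} {g : α → F} {c : ℝ}
    (hg : ∀ᶠ x in l, ‖g x‖ ≠ 0) (h : Tendsto (fun x => ‖f x‖ / ‖g x‖) l (𝓝 c)) : f =O[l] g :=
  isBigO_norm_norm.1 <| isBigO_of_div_tendsto_nhds (hg.mono fun _ hx h0 => absurd h0 hx) c h

lemma nhdsWithin_ball_diff_singleton {X : Type*} [PseudoMetricSpace X] (a : X) {r : ℝ}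
    (hr : 0 < r) : 𝓝[ball a r \ {a}] a = 𝓝[≠] a := by
  rw [Set.sdiff_eq]
  exact nhdsWithin_inter_of_mem (mem_nhdsWithin_of_mem_nhds (ball_mem_nhds a hr))

section Conformal

variable {m : ℕ} {Φ : ℂ → (Fin m → ℝ)} {x : ℂ}

lemma sum_sq_p1_sub_I_mul_p2_eq_zero
    (hconf : (∑ k, p1 Φ x k * p2 Φ x k) = 0 ∧
      √(∑ k, (p1 Φ x k) ^ 2) = √(∑ k, (p2 Φ x k) ^ 2)) :
    ∑ k, ((p1 Φ x k : ℂ) - I * p2 Φ x k) ^ 2 = 0 :=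
  sum_sq_ofReal_sub_I_mul_eq_zero hconf.1
    ((Real.sqrt_inj (by positivity) (by positivity)).1 hconf.2)

lemma sum_norm_p1_sub_I_mul_p2_sq (hconf : √(∑ k, (p1 Φ x k) ^ 2) = √(∑ k, (p2 Φ x k) ^ 2)) :
    ∑ k, ‖(p1 Φ x k : ℂ) - I * p2 Φ x k‖ ^ 2 = 2 * eLam Φ x ^ 2 := by
  rw [sum_norm_ofReal_sub_I_mul_sq, ← (Real.sqrt_inj (by positivity) (by positivity)).1 hconf,
    eLam, Real.sq_sqrt (by positivity)]
  ring

end Conformal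

theorem stmt10_general (m : ℕ) (θ₀ : ℕ) (hθ : 1 ≤ θ₀)
    (Φ : ℂ → (Fin m → ℝ))
    (hconf : ∀ x ∈ ball (0 : ℂ) 1 \ {0},
      (∑ k, p1 Φ x k * p2 Φ x k) = 0 ∧
      Real.sqrt (∑ k, (p1 Φ x k) ^ 2) = Real.sqrt (∑ k, (p2 Φ x k) ^ 2))
    (A1 A2 : Fin m → ℝ) (T : ℂ → Fin m → ℂ)
    (hT : Tendsto T (nhdsWithin 0 (ball (0 : ℂ) 1 \ {0})) (nhds 0))
    (c : ℝ) (hc : 0 < c)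
    (hlim : Tendsto (fun x : ℂ => eLam Φ x / ‖x‖ ^ (θ₀ - 1))
      (nhdsWithin 0 (ball (0 : ℂ) 1 \ {0})) (nhds c))
    (hexp : ∀ x ∈ ball (0 : ℂ) 1 \ {0}, ∀ k : Fin m,
      (p1 Φ x k : ℂ) - Complex.I * (p2 Φ x k : ℂ)
        = (θ₀ : ℂ) * ((A1 k : ℂ) + Complex.I * (A2 k : ℂ)) * x ^ (θ₀ - 1)
          + (eLam Φ x : ℂ) * T x k) :
    (∑ k, A1 k * A2 k) = 0 ∧
    Real.sqrt (∑ k, (A1 k) ^ 2) = c / θ₀ ∧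
    Real.sqrt (∑ k, (A2 k) ^ 2) = c / θ₀ := by
  set S := ball (0 : ℂ) 1 \ {0}
  have hS : ∀ᶠ x in 𝓝[S] 0, x ∈ S := self_mem_nhdsWithin
  have : (𝓝[S] (0 : ℂ)).NeBot := by
    rw [nhdsWithin_ball_diff_singleton 0 one_pos]
    infer_instance
  have hθ₀ : (θ₀ : ℂ) ≠ 0 := Nat.cast_ne_zero.2 (by omega)
  set g : ℂ → ℂ := fun x => θ₀ * x ^ (θ₀ - 1)
  have he : (fun x => (eLam Φ x : ℂ)) =O[𝓝[S] 0] g := by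
    refine (isBigO_of_tendsto_norm_div_norm (g := fun x : ℂ => x ^ (θ₀ - 1)) (c := c) ?_ ?_).trans
      (isBigO_self_const_mul hθ₀ _ _)
    · filter_upwards [hS] with x hx
      exact norm_ne_zero_iff.2 (pow_ne_zero _ hx.2)
    · simpa [eLam, Complex.norm_real, abs_of_nonneg (Real.sqrt_nonneg _)] using hlim
  have hA : ∀ k, Tendsto (fun x => ((p1 Φ x k : ℂ) - I * p2 Φ x k) / g x) (𝓝[S] 0)
      (𝓝 (A1 k + I * A2 k)) := fun k =>
    tendsto_div_of_eq_mul_add_mul (by filter_upwards [hS] with x hx; rw [hexp x hx k]; ring)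
      (hS.mono fun x hx => mul_ne_zero hθ₀ (pow_ne_zero _ hx.2)) he (tendsto_pi_nhds.1 hT k)
  have hiso : ∑ k, ((A1 k : ℂ) + I * A2 k) ^ 2 = 0 :=
    sum_sq_eq_zero_of_tendsto_div hA
      (hS.mono fun x hx => sum_sq_p1_sub_I_mul_p2_eq_zero (hconf x hx))
  have hnorm : ∑ k, ‖(A1 k : ℂ) + I * A2 k‖ ^ 2 = 2 * (c / θ₀) ^ 2 := by
    refine tendsto_nhds_unique (tendsto_finsetSum _ fun k _ => (hA k).norm.pow 2) ?_
    have h : Tendsto (fun x => 2 * (eLam Φ x / ‖x‖ ^ (θ₀ - 1)) ^ 2 / (θ₀ : ℝ) ^ 2) (𝓝[S] 0)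
        (𝓝 (2 * (c / θ₀) ^ 2)) := by
      convert ((hlim.pow 2).const_mul 2).div_const ((θ₀ : ℝ) ^ 2) using 2
      ring
    refine h.congr' ?_
    filter_upwards [hS] with x hx
    simp only [norm_div, div_pow, ← Finset.sum_div, sum_norm_p1_sub_I_mul_p2_sq (hconf x hx).2, g,
      norm_mul, norm_pow, Complex.norm_natCast]
    ring
  exact inner_eq_zero_and_sqrt_sum_sq_eq_of_isotropic hiso hnorm (by positivity)

theorem stmt10 (m : ℕ) (hm : 2 ≤ m) (θ₀ : ℕ) (hθ : 1 ≤ θ₀)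
    (Φ : ℂ → (Fin m → ℝ))
    (hΦ : ContDiffOn ℝ 1 Φ (ball (0 : ℂ) 1 \ {0}))
    (hconf : ∀ x ∈ ball (0 : ℂ) 1 \ {0},
      (∑ k, p1 Φ x k * p2 Φ x k) = 0 ∧
      Real.sqrt (∑ k, (p1 Φ x k) ^ 2) = Real.sqrt (∑ k, (p2 Φ x k) ^ 2))
    (A1 A2 : Fin m → ℝ) (T : ℂ → Fin m → ℂ)
    (hT : Tendsto T (nhdsWithin 0 (ball (0 : ℂ) 1 \ {0})) (nhds 0))
    (c : ℝ) (hc : 0 < c)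
    (hlim : Tendsto (fun x : ℂ => eLam Φ x / ‖x‖ ^ (θ₀ - 1))
      (nhdsWithin 0 (ball (0 : ℂ) 1 \ {0})) (nhds c))
    (hexp : ∀ x ∈ ball (0 : ℂ) 1 \ {0}, ∀ k : Fin m,
      (p1 Φ x k : ℂ) - Complex.I * (p2 Φ x k : ℂ)
        = (θ₀ : ℂ) * ((A1 k : ℂ) + Complex.I * (A2 k : ℂ)) * x ^ (θ₀ - 1)
          + (eLam Φ x : ℂ) * T x k) :
    (∑ k, A1 k * A2 k) = 0 ∧
    Real.sqrt (∑ k, (A1 k) ^ 2) = c / θ₀ ∧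
    Real.sqrt (∑ k, (A2 k) ^ 2) = c / θ₀ :=
  stmt10_general m θ₀ hθ Φ hconf A1 A2 T hT c hc hlim hexp
end

section
/- Let m ≥ 2 and let A¹, A² ∈ ℝ^m satisfy A¹ · A² = 0 and |A¹| = |A²| ≠ 0; set A := A¹ + iA² ∈ ℂ^m. Let N ∈ ℕ and let A₀, A₁, …, A_N ∈ ℂ^m with A₀ = A, such that the real and imaginary parts of each A_s lie in the real span of {A¹, A²}, and such that for every s ∈ {1, …, N}: Σ_{j=0}^{s} ⟨A_j, A_{s−j}⟩ = 0. Then for every s ∈ {0, …, N} there exists α_s ∈ ℂ with A_s = α_s A (and α₀ = 1). -/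
/-! The bilinear form `⟨U, V⟩ = ∑ k, U k * V k` is `dotProduct`. With `u, v` the complexified
`A¹, A²`, the leading coefficient `A = u + i v` is isotropic, and a vector `p u + q v` (the only
shape allowed by the span condition) satisfies `⟨A, p u + q v⟩ = (p + i q) |A¹|²`; so
`⟨A, A_s⟩ = 0` forces `q = i p`, i.e. `A_s = p A`. Inductively, once `A_1, …, A_{s-1}` are multiples
of `A`, all middle terms of `∑_{j=0}^{s} ⟨A_j, A_{s-j}⟩` vanish and the relation reduces to
`2 ⟨A, A_s⟩ = 0`. -/

open Complex Finset

section Convolution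

variable {K ι : Type*} [CommSemiring K] [Fintype ι]

theorem sum_range_dotProduct_sub_eq_two_mul (A : ℕ → ι → K) (h0 : A 0 ⬝ᵥ A 0 = 0) (s : ℕ)
    (hmid : ∀ j, 1 ≤ j → j < s → ∃ α : K, A j = α • A 0) :
    ∑ j ∈ range (s + 1), A j ⬝ᵥ A (s - j) = 2 * (A 0 ⬝ᵥ A s) := by
  cases s with
  | zero => simp [h0]
  | succ t =>
    have hzero : ∀ i ∈ range t, A (i + 1) ⬝ᵥ A (t + 1 - (i + 1)) = 0 := by
      intro i hi
      rw [mem_range] at hi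
      obtain ⟨α, hα⟩ := hmid (i + 1) (by omega) (by omega)
      obtain ⟨β, hβ⟩ := hmid (t + 1 - (i + 1)) (by omega) (by omega)
      rw [hα, hβ, smul_dotProduct, dotProduct_smul, h0, smul_zero, smul_zero]
    rw [sum_range_succ, sum_range_succ', sum_congr rfl hzero, sum_const_zero, Nat.sub_self,
      Nat.sub_zero, dotProduct_comm (A (t + 1))]
    ring

theorem exists_eq_smul_of_sum_range_dotProduct_sub_eq_zero [NoZeroDivisors K] [NeZero (2 : K)]
    (A : ℕ → ι → K) (N : ℕ) (h0 : A 0 ⬝ᵥ A 0 = 0)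
    (hrel : ∀ s, 1 ≤ s → s ≤ N → ∑ j ∈ range (s + 1), A j ⬝ᵥ A (s - j) = 0)
    (hperp : ∀ s, 1 ≤ s → s ≤ N → A 0 ⬝ᵥ A s = 0 → ∃ α : K, A s = α • A 0) :
    ∀ s, 1 ≤ s → s ≤ N → ∃ α : K, A s = α • A 0 := by
  intro s
  induction s using Nat.strong_induction_on with
  | _ s ih =>
    intro hs hsN
    refine hperp s hs hsN ?_
    have hsum := hrel s hs hsN
    rw [sum_range_dotProduct_sub_eq_two_mul A h0 s
      fun j hj hjs => ih j hjs hj (by omega)] at hsum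
    exact (mul_eq_zero.mp hsum).resolve_left two_ne_zero

end Convolution

section Isotropic

variable {ι : Type*} [Fintype ι] {u v : ι → ℂ}

theorem add_I_smul_dotProduct_smul_add_smul (hvv : v ⬝ᵥ v = u ⬝ᵥ u) (huv : u ⬝ᵥ v = 0) (p q : ℂ) :
    (u + I • v) ⬝ᵥ (p • u + q • v) = (p + I * q) * (u ⬝ᵥ u) := by
  simp only [add_dotProduct, dotProduct_add, smul_dotProduct, dotProduct_smul, smul_eq_mul,
    dotProduct_comm v u, huv, hvv]
  ring

theorem add_I_smul_dotProduct_self (hvv : v ⬝ᵥ v = u ⬝ᵥ u) (huv : u ⬝ᵥ v = 0) :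
    (u + I • v) ⬝ᵥ (u + I • v) = 0 := by
  simpa using add_I_smul_dotProduct_smul_add_smul hvv huv 1 I

theorem smul_add_smul_eq_smul_add_I_smul (hvv : v ⬝ᵥ v = u ⬝ᵥ u) (huv : u ⬝ᵥ v = 0)
    (huu : u ⬝ᵥ u ≠ 0) {p q : ℂ} (h : (u + I • v) ⬝ᵥ (p • u + q • v) = 0) :
    p • u + q • v = p • (u + I • v) := by
  rw [add_I_smul_dotProduct_smul_add_smul hvv huv] at h
  have hq : q = I * p := by
    linear_combination (-I) * (mul_eq_zero.mp h).resolve_right huu + q * I_sq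
  rw [hq, smul_add, mul_comm I p, mul_smul]

end Isotropic

theorem exists_eq_smul_add_smul_of_re_mem_span_of_im_mem_span {ι : Type*} {x y : ι → ℝ}
    {V : ι → ℂ} (hre : (fun k => (V k).re) ∈ Submodule.span ℝ ({x, y} : Set (ι → ℝ)))
    (him : (fun k => (V k).im) ∈ Submodule.span ℝ ({x, y} : Set (ι → ℝ))) :
    ∃ p q : ℂ, V = p • (fun k => (x k : ℂ)) + q • (fun k => (y k : ℂ)) := by
  obtain ⟨a, b, hab⟩ := Submodule.mem_span_pair.mp hre
  obtain ⟨c, d, hcd⟩ := Submodule.mem_span_pair.mp him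
  refine ⟨a + c * I, b + d * I, funext fun k => Complex.ext ?_ ?_⟩
  · simpa using (congrFun hab k).symm
  · simpa using (congrFun hcd k).symm

theorem stmt12_general (m : ℕ) (A1 A2 : Fin m → ℝ)
    (horth : (∑ k, A1 k * A2 k) = 0)
    (hnorm : (∑ k, (A1 k) ^ 2) = ∑ k, (A2 k) ^ 2)
    (hne : (∑ k, (A1 k) ^ 2) ≠ 0)
    (N : ℕ) (A : ℕ → Fin m → ℂ)
    (hA0 : A 0 = fun k => (A1 k : ℂ) + Complex.I * (A2 k : ℂ))
    (hspan : ∀ s ≤ N,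
      (fun k => (A s k).re) ∈ Submodule.span ℝ ({A1, A2} : Set (Fin m → ℝ)) ∧
      (fun k => (A s k).im) ∈ Submodule.span ℝ ({A1, A2} : Set (Fin m → ℝ)))
    (hrel : ∀ s : ℕ, 1 ≤ s → s ≤ N →
      (∑ j ∈ Finset.range (s + 1), ∑ k, A j k * A (s - j) k) = 0) :
    ∀ s ≤ N, ∃ α : ℂ, A s = α • A 0 ∧ (s = 0 → α = 1) := by
  set u : Fin m → ℂ := fun k => (A1 k : ℂ)
  set v : Fin m → ℂ := fun k => (A2 k : ℂ)
  have hA0' : A 0 = u + I • v := hA0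
  have hcast (x y : Fin m → ℝ) : (fun k => (x k : ℂ)) ⬝ᵥ (fun k => (y k : ℂ)) = ↑(x ⬝ᵥ y) :=
    (RingHom.map_dotProduct ofRealHom x y).symm
  have hsq (x : Fin m → ℝ) : x ⬝ᵥ x = ∑ k, x k ^ 2 := by simp only [dotProduct, sq]
  have huv : u ⬝ᵥ v = 0 := by rw [hcast]; exact_mod_cast horth
  have hvv : v ⬝ᵥ v = u ⬝ᵥ u := by rw [hcast, hcast, hsq, hsq, hnorm]
  have huu : u ⬝ᵥ u ≠ 0 := by rw [hcast, hsq]; exact_mod_cast hne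
  have hperp (s : ℕ) (_ : 1 ≤ s) (hsN : s ≤ N) (h : A 0 ⬝ᵥ A s = 0) :
      ∃ α : ℂ, A s = α • A 0 := by
    obtain ⟨p, q, hpq⟩ :=
      exists_eq_smul_add_smul_of_re_mem_span_of_im_mem_span (hspan s hsN).1 (hspan s hsN).2
    rw [hA0', hpq] at h
    exact ⟨p, by rw [hpq, hA0', smul_add_smul_eq_smul_add_I_smul hvv huv huu h]⟩
  rintro (_ | s) hsN
  · exact ⟨1, (one_smul ℂ _).symm, fun _ => rfl⟩
  · obtain ⟨α, hα⟩ := exists_eq_smul_of_sum_range_dotProduct_sub_eq_zero A N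
      (hA0' ▸ add_I_smul_dotProduct_self hvv huv) hrel hperp (s + 1) (by omega) hsN
    exact ⟨α, hα, fun h => absurd h s.succ_ne_zero⟩

theorem stmt12 (m : ℕ) (hm : 2 ≤ m) (A1 A2 : Fin m → ℝ)
    (horth : (∑ k, A1 k * A2 k) = 0)
    (hnorm : (∑ k, (A1 k) ^ 2) = ∑ k, (A2 k) ^ 2)
    (hne : (∑ k, (A1 k) ^ 2) ≠ 0)
    (N : ℕ) (A : ℕ → Fin m → ℂ)
    (hA0 : A 0 = fun k => (A1 k : ℂ) + Complex.I * (A2 k : ℂ))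
    (hspan : ∀ s ≤ N,
      (fun k => (A s k).re) ∈ Submodule.span ℝ ({A1, A2} : Set (Fin m → ℝ)) ∧
      (fun k => (A s k).im) ∈ Submodule.span ℝ ({A1, A2} : Set (Fin m → ℝ)))
    (hrel : ∀ s : ℕ, 1 ≤ s → s ≤ N →
      (∑ j ∈ Finset.range (s + 1), ∑ k, A j k * A (s - j) k) = 0) :
    ∀ s ≤ N, ∃ α : ℂ, A s = α • A 0 ∧ (s = 0 → α = 1) :=
  stmt12_general m A1 A2 horth hnorm hne N A hA0 hspan hrel
end

section
/- Let N ≥ 1 and θ₀ ∈ ℕ with θ₀ ≥ 1, and let L be a C¹ map from the punctured closed unit disk { x ∈ ℝ² : 0 < |x| ≤ 1 } into ℝ^N. Then θ₀² ∫_{B₁(0)} |x|^{2(θ₀−1)} |L(x)|² dx ≤ ∫_{B₁(0)} |x|^{2θ₀} |∇L(x)|² dx + θ₀ ∫_{∂B₁(0)} |L|² dσ, where the inequality is understood in [0, ∞]. -/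
/-!
Along a ray `r ↦ r v`, `|v| = 1`, put `u = |L|²` and `G = |∇L|²`, so that `u'² ≤ 4 u G`. Then
`θ₀² u + θ₀ r u' + r² G` is a nonnegative quadratic form in `(θ₀, r)`, and multiplying it by
`r^(2θ₀-1)` gives `θ₀² r^(2θ₀-1) u ≤ θ₀ (r^(2θ₀) u)' + r^(2θ₀+1) G`. Integrating over
`r ∈ (a, 1)`, dropping the boundary term at `a` (it has the good sign) and letting `a → 0` gives
the inequality on each ray; integrating over the direction in polar coordinates gives the theorem.
-/

open MeasureTheory Metric Complex Set Real
open scoped ENNReal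

theorem quadratic_nonneg_of_sq_le_four_mul {a b c : ℝ} (ha : 0 ≤ a) (hc : 0 ≤ c)
    (h : b ^ 2 ≤ 4 * a * c) (x y : ℝ) : 0 ≤ a * x ^ 2 + b * x * y + c * y ^ 2 := by
  rcases ha.eq_or_lt with rfl | ha
  · obtain rfl : b = 0 := by nlinarith
    simp only [zero_mul, add_zero, zero_add]; positivity
  · have key : 4 * a * (a * x ^ 2 + b * x * y + c * y ^ 2)
        = (2 * a * x + b * y) ^ 2 + (4 * a * c - b ^ 2) * y ^ 2 := by ring
    have := sub_nonneg.2 h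
    refine (mul_nonneg_iff_of_pos_left (by positivity : (0:ℝ) < 4 * a)).1 ?_
    rw [key]; positivity

theorem sq_sum_two_mul_le {ι : Type*} [Fintype ι] (x d : ι → ℝ) :
    (∑ k, 2 * x k * d k) ^ 2 ≤ 4 * (∑ k, x k ^ 2) * ∑ k, d k ^ 2 := by
  have := Finset.sum_mul_sq_le_sq_mul_sq Finset.univ x d
  simp only [mul_assoc, ← Finset.mul_sum]
  nlinarith

theorem hardy_intervalIntegral_le (n : ℕ) {u u' G : ℝ → ℝ} {a b : ℝ} (ha : 0 ≤ a) (hab : a ≤ b)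
    (hu : ContinuousOn u (Icc a b)) (hu' : ∀ r ∈ Ioo a b, HasDerivAt u (u' r) r)
    (hu0 : ∀ r ∈ Ioo a b, 0 ≤ u r) (hG0 : ∀ r ∈ Ioo a b, 0 ≤ G r)
    (hu'G : ∀ r ∈ Ioo a b, u' r ^ 2 ≤ 4 * u r * G r)
    (hG : IntegrableOn (fun r => r ^ (2 * n + 3) * G r) (Icc a b)) :
    ((n : ℝ) + 1) ^ 2 * ∫ r in a..b, r ^ (2 * n + 1) * u r
      ≤ (∫ r in a..b, r ^ (2 * n + 3) * G r)
        + ((n : ℝ) + 1) * (b ^ (2 * n + 2) * u b - a ^ (2 * n + 2) * u a) := by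
  set c : ℝ := n + 1
  have hderiv : ∀ r ∈ Ioo a b, HasDerivAt (fun r => c * (r ^ (2 * n + 2) * u r))
      (c * ((2 * n + 2) * r ^ (2 * n + 1) * u r + r ^ (2 * n + 2) * u' r)) r := by
    intro r hr
    refine (((hasDerivAt_pow _ r).fun_mul (hu' r hr)).const_mul c).congr_deriv ?_
    rw [show 2 * n + 2 - 1 = 2 * n + 1 by omega]
    push_cast; ring
  -- `c (r^(2n+2) u)' - c² r^(2n+1) u + r^(2n+3) G = r^(2n+1) (c² u + c r u' + r² G)`
  have hpointwise : ∀ r ∈ Ioo a b, c ^ 2 * (r ^ (2 * n + 1) * u r) - r ^ (2 * n + 3) * G r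
      ≤ c * ((2 * n + 2) * r ^ (2 * n + 1) * u r + r ^ (2 * n + 2) * u' r) := by
    intro r hr
    have hq := quadratic_nonneg_of_sq_le_four_mul (hu0 r hr) (hG0 r hr) (hu'G r hr) c r
    linear_combination mul_nonneg (pow_nonneg (ha.trans hr.1.le) (2 * n + 1)) hq
  have hcont : ContinuousOn (fun r => c * (r ^ (2 * n + 2) * u r)) (Icc a b) := by fun_prop
  have hint : IntegrableOn (fun r => c ^ 2 * (r ^ (2 * n + 1) * u r) - r ^ (2 * n + 3) * G r)
      (Icc a b) :=
    (((continuousOn_pow _).mul hu).integrableOn_Icc.const_mul _).sub hG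
  have hFTC := intervalIntegral.integral_le_sub_of_hasDeriv_right_of_le hab hcont
    (fun r hr => (hderiv r hr).hasDerivWithinAt) hint hpointwise
  rw [intervalIntegral.integral_sub, intervalIntegral.integral_const_mul] at hFTC
  · linarith
  · exact (((continuousOn_pow _).mul hu).intervalIntegrable_of_Icc hab).const_mul _
  · exact (intervalIntegrable_iff_integrableOn_Icc_of_le hab).2 hG

theorem ofReal_intervalIntegral_eq_setLIntegral_Ioo {f : ℝ → ℝ} {a b : ℝ} (hab : a ≤ b)
    (hf : IntegrableOn f (Ioo a b)) (hf0 : ∀ r ∈ Ioo a b, 0 ≤ f r) :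
    ENNReal.ofReal (∫ r in a..b, f r) = ∫⁻ r in Ioo a b, ENNReal.ofReal (f r) := by
  rw [intervalIntegral.integral_of_le hab, integral_Ioc_eq_integral_Ioo,
    ofReal_integral_eq_lintegral_ofReal hf
      ((ae_restrict_iff' measurableSet_Ioo).2 (.of_forall hf0))]

theorem hardy_setLIntegral_Ioo_le (n : ℕ) {u u' G : ℝ → ℝ} {a : ℝ} (ha : 0 ≤ a) (ha1 : a ≤ 1)
    (hu : ContinuousOn u (Icc a 1)) (hu' : ∀ r ∈ Ioo a 1, HasDerivAt u (u' r) r)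
    (hu0 : ∀ r ∈ Icc a 1, 0 ≤ u r) (hG0 : ∀ r ∈ Ioo a 1, 0 ≤ G r)
    (hu'G : ∀ r ∈ Ioo a 1, u' r ^ 2 ≤ 4 * u r * G r)
    (hG : IntegrableOn (fun r => r ^ (2 * n + 3) * G r) (Ioo a 1)) :
    ((n : ℝ≥0∞) + 1) ^ 2 * ∫⁻ r in Ioo a 1, ENNReal.ofReal (r ^ (2 * n + 1) * u r)
      ≤ (∫⁻ r in Ioo a 1, ENNReal.ofReal (r ^ (2 * n + 3) * G r))
        + ((n : ℝ≥0∞) + 1) * ENNReal.ofReal (u 1) := by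
  have hreal := hardy_intervalIntegral_le n ha ha1 hu hu'
    (fun r hr => hu0 r (Ioo_subset_Icc_self hr)) hG0 hu'G
    (by rwa [integrableOn_Icc_iff_integrableOn_Ioo])
  have hua : 0 ≤ a ^ (2 * n + 2) * u a := mul_nonneg (pow_nonneg ha _) (hu0 a (left_mem_Icc.2 ha1))
  rw [← ofReal_intervalIntegral_eq_setLIntegral_Ioo ha1
      (((continuousOn_pow _).fun_mul hu).integrableOn_Icc.mono_set Ioo_subset_Icc_self)
      fun r hr => mul_nonneg (pow_nonneg (ha.trans hr.1.le) _) (hu0 r (Ioo_subset_Icc_self hr)),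
    ← ofReal_intervalIntegral_eq_setLIntegral_Ioo ha1 hG
      fun r hr => mul_nonneg (pow_nonneg (ha.trans hr.1.le) _) (hG0 r hr)]
  calc ((n : ℝ≥0∞) + 1) ^ 2 * ENNReal.ofReal (∫ r in a..1, r ^ (2 * n + 1) * u r)
      = ENNReal.ofReal (((n : ℝ) + 1) ^ 2 * ∫ r in a..1, r ^ (2 * n + 1) * u r) := by
        rw [ENNReal.ofReal_mul (by positivity)]; norm_cast
    _ ≤ ENNReal.ofReal ((∫ r in a..1, r ^ (2 * n + 3) * G r) + ((n : ℝ) + 1) * u 1) := by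
        gcongr
        rw [one_pow, one_mul] at hreal
        nlinarith
    _ ≤ _ := by
        grw [ENNReal.ofReal_add_le, ENNReal.ofReal_mul (by positivity)]
        norm_cast

theorem hardy_lintegral_Ioo_le (n : ℕ) {u u' G : ℝ → ℝ}
    (hu : ContinuousOn u (Ioc 0 1)) (hu' : ∀ r ∈ Ioo 0 1, HasDerivAt u (u' r) r)
    (hG : ContinuousOn G (Ioo 0 1))
    (hu0 : ∀ r ∈ Ioc 0 1, 0 ≤ u r) (hG0 : ∀ r ∈ Ioo 0 1, 0 ≤ G r)
    (hu'G : ∀ r ∈ Ioo 0 1, u' r ^ 2 ≤ 4 * u r * G r) :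
    ((n : ℝ≥0∞) + 1) ^ 2 * ∫⁻ r in Ioo 0 1, ENNReal.ofReal (r ^ (2 * n + 1) * u r)
      ≤ (∫⁻ r in Ioo 0 1, ENNReal.ofReal (r ^ (2 * n + 3) * G r))
        + ((n : ℝ≥0∞) + 1) * ENNReal.ofReal (u 1) := by
  set I := ∫⁻ r in Ioo 0 1, ENNReal.ofReal (r ^ (2 * n + 3) * G r)
  by_cases hI : I = ∞
  · simp [hI]
  have hGint : IntegrableOn (fun r => r ^ (2 * n + 3) * G r) (Ioo 0 1) := by
    refine ⟨((continuousOn_pow _).mul hG).aestronglyMeasurable measurableSet_Ioo,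
      (hasFiniteIntegral_iff_ofReal ?_).2 (lt_top_iff_ne_top.2 hI)⟩
    filter_upwards [self_mem_ae_restrict measurableSet_Ioo] with r hr
    exact mul_nonneg (pow_nonneg hr.1.le _) (hG0 r hr)
  -- `u` may blow up at `0`: exhaust `(0, 1)` by the intervals `(1 / (j + 1), 1)`.
  have htruncated : ∀ a ∈ Ioc (0 : ℝ) 1,
      ((n : ℝ≥0∞) + 1) ^ 2 * ∫⁻ r in Ioo a 1, ENNReal.ofReal (r ^ (2 * n + 1) * u r)
        ≤ I + ((n : ℝ≥0∞) + 1) * ENNReal.ofReal (u 1) := by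
    intro a ha
    have hsub : Ioo a 1 ⊆ Ioo 0 1 := Ioo_subset_Ioo_left ha.1.le
    have hsub' : Icc a 1 ⊆ Ioc 0 1 := fun r hr => ⟨ha.1.trans_le hr.1, hr.2⟩
    grw [hardy_setLIntegral_Ioo_le n ha.1.le ha.2 (hu.mono hsub') (fun r hr => hu' r (hsub hr))
      (fun r hr => hu0 r (hsub' hr)) (fun r hr => hG0 r (hsub hr))
      (fun r hr => hu'G r (hsub hr)) (hGint.mono_set hsub), lintegral_mono_set hsub]
  have hcover : Ioo (0 : ℝ) 1 ⊆ ⋃ j : ℕ, Ioo (1 / ((j : ℝ) + 1)) 1 := fun r hr =>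
    have ⟨j, hj⟩ := exists_nat_one_div_lt hr.1
    mem_iUnion.2 ⟨j, hj, hr.2⟩
  have hmono : Monotone fun j : ℕ => Ioo (1 / ((j : ℝ) + 1)) 1 := fun i j hij =>
    Ioo_subset_Ioo_left (Nat.one_div_le_one_div hij)
  calc ((n : ℝ≥0∞) + 1) ^ 2 * ∫⁻ r in Ioo 0 1, ENNReal.ofReal (r ^ (2 * n + 1) * u r)
      ≤ ((n : ℝ≥0∞) + 1) ^ 2 * ⨆ j : ℕ,
          ∫⁻ r in Ioo (1 / ((j : ℝ) + 1)) 1, ENNReal.ofReal (r ^ (2 * n + 1) * u r) := by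
        rw [← setLIntegral_iUnion_of_directed _ hmono.directed_le]
        gcongr
    _ ≤ I + ((n : ℝ≥0∞) + 1) * ENNReal.ofReal (u 1) := by
        rw [ENNReal.mul_iSup]
        exact iSup_le fun j =>
          htruncated _ ⟨Nat.one_div_pos_of_nat, (div_le_one₀ (by positivity)).2 (by simp)⟩

theorem hardy_lintegral_ray_le {E ι : Type*} [NormedAddCommGroup E] [NormedSpace ℝ E]
    [Fintype ι] (n : ℕ) {L : E → ι → ℝ} (hL : ContDiffOn ℝ 1 L {x | x ≠ 0 ∧ ‖x‖ ≤ 1})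
    {v : E} (hv : ‖v‖ = 1) :
    ((n : ℝ≥0∞) + 1) ^ 2 *
        ∫⁻ r in Ioo 0 1, ENNReal.ofReal (r ^ (2 * n + 1) * ∑ k, L (r • v) k ^ 2)
      ≤ (∫⁻ r in Ioo 0 1, ENNReal.ofReal
            (r ^ (2 * n + 3) * ∑ k, ‖fderiv ℝ (fun y => L y k) (r • v)‖ ^ 2))
        + ((n : ℝ≥0∞) + 1) * ENNReal.ofReal (∑ k, L v k ^ 2) := by
  set S : Set E := {x | x ≠ 0 ∧ ‖x‖ ≤ 1}
  set U : Set E := Metric.ball 0 1 \ {0}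
  have hU : IsOpen U := Metric.isOpen_ball.sdiff isClosed_singleton
  have hUS : U ⊆ S := fun x hx => ⟨hx.2, (mem_ball_zero_iff.1 hx.1).le⟩
  have hv0 : v ≠ 0 := norm_ne_zero_iff.1 (by simp [hv])
  have hmapsS : MapsTo (fun r : ℝ => r • v) (Ioc 0 1) S := fun r hr =>
    ⟨smul_ne_zero hr.1.ne' hv0, by simpa [norm_smul, hv, abs_of_pos hr.1] using hr.2⟩
  have hmapsU : MapsTo (fun r : ℝ => r • v) (Ioo 0 1) U := fun r hr =>
    ⟨by simpa [norm_smul, hv, abs_of_pos hr.1] using hr.2, smul_ne_zero hr.1.ne' hv0⟩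
  have hLk : ∀ k, ContDiffOn ℝ 1 (fun y => L y k) U := fun k => (contDiffOn_pi.1 hL k).mono hUS
  have hderiv : ∀ k, ∀ r ∈ Ioo (0 : ℝ) 1,
      HasDerivAt (fun r : ℝ => L (r • v) k) (fderiv ℝ (fun y => L y k) (r • v) v) r := by
    intro k r hr
    have hdiff := ((hLk k).contDiffAt (hU.mem_nhds (hmapsU hr))).differentiableAt one_ne_zero
    exact hdiff.hasFDerivAt.comp_hasDerivAt r
      (((hasDerivAt_id r).smul_const v).congr_deriv (one_smul ℝ v))
  have hfderiv : ∀ k, ContinuousOn (fun r : ℝ => fderiv ℝ (fun y => L y k) (r • v)) (Ioo 0 1) :=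
    fun k => ((hLk k).continuousOn_fderiv_of_isOpen hU le_rfl).comp (by fun_prop) hmapsU
  have hcont : ContinuousOn (fun r : ℝ => L (r • v)) (Ioc 0 1) :=
    hL.continuousOn.comp (by fun_prop) hmapsS
  have := hardy_lintegral_Ioo_le n (u := fun r => ∑ k, L (r • v) k ^ 2)
    (u' := fun r => ∑ k, 2 * L (r • v) k * fderiv ℝ (fun y => L y k) (r • v) v)
    (G := fun r => ∑ k, ‖fderiv ℝ (fun y => L y k) (r • v)‖ ^ 2)
    (continuousOn_finsetSum _ fun k _ => ((continuous_apply k).comp_continuousOn hcont).pow 2)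
    ?_ (continuousOn_finsetSum _ fun k _ => ((hfderiv k).norm.pow 2))
    (fun r _ => by positivity) (fun r _ => by positivity) ?_
  · simpa using this
  · intro r hr
    exact HasDerivAt.fun_sum fun k _ => ((hderiv k r hr).fun_pow 2).congr_deriv (by ring)
  · intro r _
    refine (sq_sum_two_mul_le _ _).trans ?_
    refine mul_le_mul_of_nonneg_left (Finset.sum_le_sum fun k _ => ?_) (by positivity)
    simpa [hv] using
      pow_le_pow_left₀ (norm_nonneg _) ((fderiv ℝ (fun y => L y k) (r • v)).le_opNorm v) 2

theorem lintegral_ball_eq_setLIntegral_polar (R : ℝ) (g : ℂ → ℝ≥0∞) :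
    ∫⁻ x in ball 0 R, g x
      = ∫⁻ p in Ioo 0 R ×ˢ Ioo (-π) π, ENNReal.ofReal p.1 * g (p.1 * exp (p.2 * I)) := by
  have hsymm : ∀ p : ℝ × ℝ, Complex.polarCoord.symm p = p.1 * exp (p.2 * I) := fun p => by
    simp [exp_mul_I]
  rw [← lintegral_indicator measurableSet_ball, ← Complex.lintegral_comp_polarCoord_symm,
    polarCoord_target, ← lintegral_indicator (measurableSet_Ioi.prod measurableSet_Ioo),
    ← lintegral_indicator (measurableSet_Ioo.prod measurableSet_Ioo)]
  congr 1
  ext ⟨r, θ⟩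
  by_cases hr : 0 < r
  · by_cases hθ : θ ∈ Ioo (-π) π
    · simp [indicator, hsymm, hr, hθ, abs_of_pos hr]
    · simp [indicator, hθ]
  · simp [indicator, hr]

theorem lintegral_ball_le_lintegral_lintegral_polar (R : ℝ) (g : ℂ → ℝ≥0∞) :
    ∫⁻ x in ball 0 R, g x
      ≤ ∫⁻ θ in Ioo (-π) π, ∫⁻ r in Ioo 0 R, ENNReal.ofReal r * g (r * exp (θ * I)) := by
  rw [lintegral_ball_eq_setLIntegral_polar, Measure.volume_eq_prod, ← Measure.prod_restrict,
    ← lintegral_prod_swap]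
  exact lintegral_prod_le _

theorem lintegral_ball_eq_lintegral_lintegral_polar (R : ℝ) {g : ℂ → ℝ≥0∞} (hg : Measurable g) :
    ∫⁻ x in ball 0 R, g x
      = ∫⁻ θ in Ioo (-π) π, ∫⁻ r in Ioo 0 R, ENNReal.ofReal r * g (r * exp (θ * I)) := by
  rw [lintegral_ball_eq_setLIntegral_polar, Measure.volume_eq_prod, ← Measure.prod_restrict,
    ← lintegral_prod_swap, lintegral_prod _ (by fun_prop)]
  rfl

theorem Function.Periodic.setLIntegral_Ioc_add_eq {f : ℝ → ℝ≥0∞} {T : ℝ} (hf : Periodic f T)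
    (hT : 0 < T) (s t : ℝ) :
    ∫⁻ x in Ioc s (s + T), f x = ∫⁻ x in Ioc t (t + T), f x :=
  (isAddFundamentalDomain_Ioc hT s).setLIntegral_eq (isAddFundamentalDomain_Ioc hT t) f
    hf.map_vadd_zmultiples

theorem hardy_lintegral_polar_slice_le {ι : Type*} [Fintype ι] (n : ℕ) {L : ℂ → ι → ℝ}
    (hL : ContDiffOn ℝ 1 L {x | x ≠ 0 ∧ ‖x‖ ≤ 1}) (θ : ℝ) :
    ((n : ℝ≥0∞) + 1) ^ 2 * ∫⁻ r in Ioo 0 1, ENNReal.ofReal r *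
        ENNReal.ofReal (‖(r : ℂ) * exp (θ * I)‖ ^ (2 * n) * ∑ k, L (r * exp (θ * I)) k ^ 2)
      ≤ (∫⁻ r in Ioo 0 1, ENNReal.ofReal r * ENNReal.ofReal (‖(r : ℂ) * exp (θ * I)‖ ^ (2 * (n + 1))
          * ∑ k, ‖fderiv ℝ (fun y => L y k) (r * exp (θ * I))‖ ^ 2))
        + ((n : ℝ≥0∞) + 1) * ENNReal.ofReal (∑ k, L (exp (θ * I)) k ^ 2) := by
  have hnorm : ∀ r ∈ Ioo (0 : ℝ) 1, ‖(r : ℂ) * exp (θ * I)‖ = r := fun r hr => by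
    rw [norm_mul, norm_exp_ofReal_mul_I, norm_real, Real.norm_of_nonneg hr.1.le, mul_one]
  convert hardy_lintegral_ray_le n hL (norm_exp_ofReal_mul_I θ) using 2 <;>
    refine setLIntegral_congr_fun measurableSet_Ioo fun r hr => ?_ <;>
    rw [← ENNReal.ofReal_mul hr.1.le, hnorm r hr, ← real_smul] <;> ring_nf

theorem stmt14_general (N : ℕ) (θ₀ : ℕ)
    (L : ℂ → Fin N → ℝ)
    (hL : ContDiffOn ℝ 1 L {x : ℂ | x ≠ 0 ∧ ‖x‖ ≤ 1}) :
    (θ₀ : ENNReal) ^ 2 *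
        ∫⁻ x in ball (0 : ℂ) 1,
          ENNReal.ofReal (‖x‖ ^ (2 * (θ₀ - 1)) * ∑ k, (L x k) ^ 2)
      ≤ (∫⁻ x in ball (0 : ℂ) 1,
            ENNReal.ofReal
              (‖x‖ ^ (2 * θ₀) * ∑ k, ‖fderiv ℝ (fun y => L y k) x‖ ^ 2))
        + (θ₀ : ENNReal) *
            ∫⁻ θ in Set.Ioc (0 : ℝ) (2 * Real.pi),
              ENNReal.ofReal (∑ k, (L (Complex.exp ((θ : ℂ) * Complex.I)) k) ^ 2) := by
  cases θ₀ with
  | zero => simp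
  | succ n =>
  set g₁ : ℂ → ℝ≥0∞ := fun x => ENNReal.ofReal (‖x‖ ^ (2 * n) * ∑ k, L x k ^ 2)
  set g₂ : ℂ → ℝ≥0∞ := fun x =>
    ENNReal.ofReal (‖x‖ ^ (2 * (n + 1)) * ∑ k, ‖fderiv ℝ (fun y => L y k) x‖ ^ 2)
  set boundary : ℝ → ℝ≥0∞ := fun θ => ENNReal.ofReal (∑ k, L (exp (θ * I)) k ^ 2)
  have hboundary : Continuous boundary := by
    have : Continuous fun θ : ℝ => L (exp (θ * I)) :=
      hL.continuousOn.comp_continuous (by fun_prop) fun θ => ⟨exp_ne_zero _, by simp⟩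
    exact ENNReal.continuous_ofReal.comp
      (continuous_finsetSum _ fun k _ => ((continuous_apply k).comp this).pow 2)
  have hperiodic : ∫⁻ θ in Ioo (-π) π, boundary θ = ∫⁻ θ in Ioc 0 (2 * π), boundary θ := by
    have : Function.Periodic boundary (2 * π) := fun θ => by
      simp only [boundary]; push_cast; rw [add_mul, Complex.exp_add, exp_two_pi_mul_I, mul_one]
    rw [setLIntegral_congr Ioo_ae_eq_Ioc]
    have h := this.setLIntegral_Ioc_add_eq two_pi_pos (-π) 0
    rwa [zero_add, show -π + 2 * π = π by ring] at h
  push_cast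
  calc ((n : ℝ≥0∞) + 1) ^ 2 * ∫⁻ x in ball 0 1, g₁ x
      ≤ ((n : ℝ≥0∞) + 1) ^ 2 *
          ∫⁻ θ in Ioo (-π) π, ∫⁻ r in Ioo 0 1, ENNReal.ofReal r * g₁ (r * exp (θ * I)) := by
        gcongr
        exact lintegral_ball_le_lintegral_lintegral_polar 1 g₁
    _ ≤ ∫⁻ θ in Ioo (-π) π, (∫⁻ r in Ioo 0 1, ENNReal.ofReal r * g₂ (r * exp (θ * I)))
          + ((n : ℝ≥0∞) + 1) * boundary θ := by
        rw [← lintegral_const_mul' _ _ (by finiteness)]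
        exact lintegral_mono fun θ => hardy_lintegral_polar_slice_le n hL θ
    _ = (∫⁻ x in ball 0 1, g₂ x) + ((n : ℝ≥0∞) + 1) * ∫⁻ θ in Ioc 0 (2 * π), boundary θ := by
        rw [lintegral_add_right _ (hboundary.measurable.const_mul _),
          lintegral_const_mul' _ _ (by finiteness), hperiodic,
          lintegral_ball_eq_lintegral_lintegral_polar 1 (by fun_prop)]

theorem stmt14 (N : ℕ) (hN : 1 ≤ N) (θ₀ : ℕ) (hθ : 1 ≤ θ₀)
    (L : ℂ → Fin N → ℝ)
    (hL : ContDiffOn ℝ 1 L {x : ℂ | x ≠ 0 ∧ ‖x‖ ≤ 1}) :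
    (θ₀ : ENNReal) ^ 2 *
        ∫⁻ x in ball (0 : ℂ) 1,
          ENNReal.ofReal (‖x‖ ^ (2 * (θ₀ - 1)) * ∑ k, (L x k) ^ 2)
      ≤ (∫⁻ x in ball (0 : ℂ) 1,
            ENNReal.ofReal
              (‖x‖ ^ (2 * θ₀) * ∑ k, ‖fderiv ℝ (fun y => L y k) x‖ ^ 2))
        + (θ₀ : ENNReal) *
            ∫⁻ θ in Set.Ioc (0 : ℝ) (2 * Real.pi),
              ENNReal.ofReal (∑ k, (L (Complex.exp ((θ : ℂ) * Complex.I)) k) ^ 2) :=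
  stmt14_general N θ₀ L hL
end
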